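/- arXiv:1802.03695 — 2 statements merged into one kernel-verified Lean document; each statement's English description precedes it below -/
import Mathlib

section
/- Let f = (1+X+X²)·(1+X²)⁻¹ ∈ (ZMod 2)⟦X⟧. For all polynomials p, q ∈ (ZMod 2)[Y], if X·p(f) + (1+X)·q(f) = 0 in (ZMod 2)⟦X⟧ (where p(f), q(f) denote the evaluations of p and q at the power series f), then p = 0 and q = 0. -/
/-!
Write `f = A / B` with `A = 1 + X + X²` and `B = (X - 1)² = 1 + X²`. Multiplying by `Bⁿ` for
`n ≥ deg p` turns `p(f)` into the polynomial `Σ pᵢ Aⁱ Bⁿ⁻ⁱ`, which is `B^(n - deg p)` times a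
polynomial taking the value `lead(p) · A(1)^deg p ≠ 0` at `1`; so it vanishes at `1` to the even
order `2 (n - deg p)`. In characteristic `2` the hypothesis reads `X · p(f) = (X - 1) · q(f)`,
and comparing orders of vanishing at `1` gives `even = odd` unless both sides are zero.
-/

open PowerSeries

noncomputable section

def f : PowerSeries (ZMod 2) := (1 + X + X ^ 2) * (1 + X ^ 2)⁻¹

open Finset

namespace Polynomial

section CommSemiring

variable {R S : Type*} [CommSemiring R] [CommSemiring S] [Algebra R S]

theorem aeval_homogenize (p : R[X]) (n : ℕ) (g : Fin 2 → S) :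
    MvPolynomial.aeval g (p.homogenize n) =
      ∑ kl ∈ antidiagonal n, algebraMap R S (p.coeff kl.1) * g 0 ^ kl.1 * g 1 ^ kl.2 := by
  simp [homogenize, MvPolynomial.aeval_monomial, Finsupp.prod_fintype, mul_assoc]

theorem aeval_homogenize_of_mul_eq {p : R[X]} {n : ℕ} (hn : p.natDegree ≤ n) {a b c : S}
    (hc : c * b = a) : MvPolynomial.aeval ![a, b] (p.homogenize n) = b ^ n * aeval c p := by
  rw [aeval_homogenize, Nat.sum_antidiagonal_eq_sum_range_succ_mk,
    aeval_eq_sum_range' (Nat.lt_succ_of_le hn), mul_sum]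
  refine sum_congr rfl fun k hk => ?_
  rw [← Nat.add_sub_of_le (Nat.le_of_lt_succ (mem_range.mp hk))]
  simp only [← hc, Algebra.smul_def, Matrix.cons_val_zero, Matrix.cons_val_one,
    Nat.add_sub_cancel_left]
  ring

theorem map_aeval_homogenize_of_mul_eq {A : Type*} [CommSemiring A] [Algebra R A]
    (φ : A →ₐ[R] S) {p : R[X]} {n : ℕ} (hn : p.natDegree ≤ n) {a b : A} {c : S}
    (hc : c * φ b = φ a) :
    φ (MvPolynomial.aeval ![a, b] (p.homogenize n)) = φ b ^ n * aeval c p := by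
  have hvec : (fun i => φ (![a, b] i)) = ![φ a, φ b] := by
    ext i
    fin_cases i <;> rfl
  rw [MvPolynomial.comp_aeval_apply, hvec, aeval_homogenize_of_mul_eq hn hc]

theorem homogenize_eq_mul_X_pow {p : R[X]} {n : ℕ} (hn : p.natDegree ≤ n) :
    p.homogenize n = p.homogenize p.natDegree * .X 1 ^ (n - p.natDegree) := by
  simpa [Nat.add_sub_of_le hn] using
    homogenize_mul p 1 le_rfl (natDegree_one.trans_le (Nat.zero_le (n - p.natDegree)))

theorem eval_aeval_homogenize_of_isRoot (p : R[X]) (n : ℕ) {a b : R[X]} {x : R}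
    (hb : b.IsRoot x) :
    (MvPolynomial.aeval ![a, b] (p.homogenize n)).eval x = p.coeff n * a.eval x ^ n := by
  rw [aeval_homogenize, eval_finsetSum, sum_eq_single (n, 0)]
  · simp
  · rintro ⟨k, l⟩ hkl hne
    have hl : l ≠ 0 := by
      rintro rfl
      simp_all
    simp [hb.eq_zero, hl]
  · simp

end CommSemiring

section IsDomain

variable {R : Type*} [CommRing R] [IsDomain R] {a p : R[X]} {x : R} {n m : ℕ}

theorem exists_aeval_homogenize_eq_mul_X_sub_C_pow (ha : a.eval x ≠ 0) (hp : p ≠ 0)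
    (hn : p.natDegree ≤ n) (hm : m ≠ 0) :
    ∃ r : R[X], ¬ r.IsRoot x ∧
      MvPolynomial.aeval ![a, (X - C x) ^ m] (p.homogenize n) =
        r * (X - C x) ^ (m * (n - p.natDegree)) := by
  refine ⟨MvPolynomial.aeval ![a, (X - C x) ^ m] (p.homogenize p.natDegree), ?_, ?_⟩
  · rw [IsRoot.def, eval_aeval_homogenize_of_isRoot _ _ (by simp [hm])]
    exact mul_ne_zero (leadingCoeff_ne_zero.mpr hp) (pow_ne_zero _ ha)
  · rw [homogenize_eq_mul_X_pow hn, map_mul, map_pow, pow_mul]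
    simp

theorem aeval_homogenize_ne_zero (ha : a.eval x ≠ 0) (hp : p ≠ 0) (hn : p.natDegree ≤ n)
    (hm : m ≠ 0) : MvPolynomial.aeval ![a, (X - C x) ^ m] (p.homogenize n) ≠ 0 := by
  obtain ⟨r, hr, hrp⟩ := exists_aeval_homogenize_eq_mul_X_sub_C_pow ha hp hn hm
  rw [hrp]
  exact mul_ne_zero (fun h => hr (by simp [h])) (pow_ne_zero _ (X_sub_C_ne_zero x))

theorem rootMultiplicity_aeval_homogenize (ha : a.eval x ≠ 0) (hp : p ≠ 0)
    (hn : p.natDegree ≤ n) (hm : m ≠ 0) :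
    rootMultiplicity x (MvPolynomial.aeval ![a, (X - C x) ^ m] (p.homogenize n)) =
      m * (n - p.natDegree) := by
  obtain ⟨r, hr, hrp⟩ := exists_aeval_homogenize_eq_mul_X_sub_C_pow ha hp hn hm
  rw [hrp, rootMultiplicity_mul_X_sub_C_pow (fun h => hr (by simp [h])),
    rootMultiplicity_eq_zero hr, zero_add]

theorem eq_zero_of_mul_aeval_homogenize_eq_X_sub_C_mul {u q : R[X]} (ha : a.eval x ≠ 0)
    (hu : u.eval x ≠ 0) (hp : p.natDegree ≤ n) (hq : q.natDegree ≤ n)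
    (h : u * MvPolynomial.aeval ![a, (X - C x) ^ 2] (p.homogenize n) =
      (X - C x) * MvPolynomial.aeval ![a, (X - C x) ^ 2] (q.homogenize n)) :
    p = 0 ∧ q = 0 := by
  have hu₀ : u ≠ 0 := fun h => hu (by simp [h])
  rcases eq_or_ne p 0 with rfl | hp₀
  · refine ⟨rfl, by_contra fun hq₀ => ?_⟩
    simp only [homogenize_zero, map_zero, mul_zero, zero_eq_mul, X_sub_C_ne_zero, false_or] at h
    exact aeval_homogenize_ne_zero ha hq₀ hq two_ne_zero h
  rcases eq_or_ne q 0 with rfl | hq₀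
  · simp only [homogenize_zero, map_zero, mul_zero, mul_eq_zero, hu₀, false_or] at h
    exact absurd h (aeval_homogenize_ne_zero ha hp₀ hp two_ne_zero)
  have hmult := congrArg (rootMultiplicity x) h
  rw [rootMultiplicity_mul (mul_ne_zero hu₀ (aeval_homogenize_ne_zero ha hp₀ hp two_ne_zero)),
    rootMultiplicity_mul
      (mul_ne_zero (X_sub_C_ne_zero x) (aeval_homogenize_ne_zero ha hq₀ hq two_ne_zero)),
    rootMultiplicity_eq_zero hu, rootMultiplicity_X_sub_C_self,
    rootMultiplicity_aeval_homogenize ha hp₀ hp two_ne_zero,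
    rootMultiplicity_aeval_homogenize ha hq₀ hq two_ne_zero] at hmult
  omega

end IsDomain

end Polynomial

theorem f_mul_X_sub_one_sq :
    f * ((Polynomial.X - Polynomial.C 1) ^ 2 : Polynomial (ZMod 2)) =
      ((1 + Polynomial.X + Polynomial.X ^ 2 : Polynomial (ZMod 2)) : (ZMod 2)⟦X⟧) := by
  rw [CharTwo.sub_eq_add, CharTwo.add_sq, f, mul_assoc]
  simp [PowerSeries.inv_mul_cancel, add_comm]

/-- If `p, q` are polynomials over `ZMod 2` with `X·p(f) + (1+X)·q(f) = 0` in `(ZMod 2)⟦X⟧`,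
then `p = 0` and `q = 0`. -/
theorem independence (p q : Polynomial (ZMod 2))
    (h : X * Polynomial.aeval f p + (1 + X) * Polynomial.aeval f q = 0) :
    p = 0 ∧ q = 0 := by
  set n := max p.natDegree q.natDegree
  set b : Polynomial (ZMod 2) := (.X - .C 1) ^ 2
  set H : Polynomial (ZMod 2) → Polynomial (ZMod 2) := fun r =>
    MvPolynomial.aeval ![1 + .X + .X ^ 2, b] (r.homogenize n)
  have hH (r : Polynomial (ZMod 2)) (hr : r.natDegree ≤ n) :
      (H r : (ZMod 2)⟦X⟧) = (b : (ZMod 2)⟦X⟧) ^ n * Polynomial.aeval f r := by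
    simpa using Polynomial.map_aeval_homogenize_of_mul_eq
      (Polynomial.coeToPowerSeries.algHom (ZMod 2)) hr (by simpa [b] using f_mul_X_sub_one_sq)
  have key : .X * H p = (.X - .C 1) * H q := by
    rw [CharTwo.sub_eq_add, ← CharTwo.add_eq_zero, map_one, add_comm Polynomial.X 1]
    apply Polynomial.coe_injective
    simp only [Polynomial.coe_add, Polynomial.coe_mul, Polynomial.coe_X, Polynomial.coe_one,
      Polynomial.coe_zero, hH p (le_max_left _ _), hH q (le_max_right _ _)]
    linear_combination (b : (ZMod 2)⟦X⟧) ^ n * h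
  have hA : (1 + .X + .X ^ 2 : Polynomial (ZMod 2)).eval 1 ≠ 0 := by
    simp only [Polynomial.eval_add, Polynomial.eval_one, Polynomial.eval_X, Polynomial.eval_pow,
      one_pow]
    decide
  exact Polynomial.eq_zero_of_mul_aeval_homogenize_eq_X_sub_C_mul hA (by simp)
    (le_max_left _ _) (le_max_right _ _) key

end
end

section
/- Let f = (1+X+X²)·(1+X²)⁻¹, u = X·(1+X+X²)⁻¹, v = (1+X)·(1+X+X²)⁻¹ in (ZMod 2)⟦X⟧, and let σ denote the coefficient shift on power series (coeff n (σ g) = coeff (n+1) g). Then for all polynomials p, q ∈ (ZMod 2)[Y]: σ( u·p(f) + v·q(f) ) = u·( p(f) + ψ_q(f) + q(0) ) + v·( p(f) + f·ψ_q(f) + f·q(1) + f·q(0) ), where q(0) and q(1) denote the evaluations of q at 0 and 1 in ZMod 2 (viewed as elements of (ZMod 2)⟦X⟧), and p(f), q(f), ψ_q(f) denote evaluations of polynomials at the power series f. -/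
open PowerSeries

noncomputable section

/-- `u = X·(1+X+X²)⁻¹`, the translation part of `x`. -/
def u : PowerSeries (ZMod 2) := X * (1 + X + X ^ 2)⁻¹

/-- `v = (1+X)·(1+X+X²)⁻¹`, the translation part of `z`. -/
def v : PowerSeries (ZMod 2) := (1 + X) * (1 + X + X ^ 2)⁻¹

/-- The coefficient shift `σ` on power series: `coeff n (σ g) = coeff (n+1) g`. -/
def shift (g : PowerSeries (ZMod 2)) : PowerSeries (ZMod 2) :=
  PowerSeries.mk fun n => coeff (R := ZMod 2) (n + 1) g

/-- `φ_0 = 0` and `φ_n = ∑_{i=1}^n Yⁱ` for `n ≥ 1`, in `(ZMod 2)[Y]`. -/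
def phi (n : ℕ) : Polynomial (ZMod 2) := ∑ i ∈ Finset.Icc 1 n, Polynomial.X ^ i

/-- For `q = ∑_{i=0}^n c_i Yⁱ` in `(ZMod 2)[Y]` (with `n` the degree of `q`),
`ψ_q = ∑_{i=1}^n c_i φ_{i-1}`. -/
def psi (q : Polynomial (ZMod 2)) : Polynomial (ZMod 2) :=
  ∑ i ∈ Finset.Icc 1 q.natDegree, Polynomial.C (q.coeff i) * phi (i - 1)

end

/-!
Since `X * shift g = g - g(0)`, it suffices to show that `X` times the right-hand side plus
`q(1)` (the constant term of `u p(f) + v q(f)`, as `u(0) = 0` and `v(0) = f(0) = 1`) gives back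
`u p(f) + v q(f)`. The `p`-part is the identity `X (u + v) = u`. For the `q`-part, the
telescoping identity `(Y + 1) ψ_q = q + q(0) + Y (q(1) + q(0))` over `𝔽₂` determines `ψ_q(f)`
after multiplying by the non-zero-divisor `f + 1 = X / (1 + X²)`; what is left are the rational
identities `f u = f + 1` and `(f + 1) v = X (u + v f)`.
-/

-- lets `grind` use `2 = 0` in `(ZMod 2)⟦X⟧`
instance PowerSeries.charP {R : Type*} [CommSemiring R] (p : ℕ) [CharP R p] : CharP R⟦X⟧ p :=
  charP_of_injective_algebraMap C_injective p

theorem shift_eq_of_eq_X_mul_add {g h : (ZMod 2)⟦X⟧} (H : g = X * h + C (constantCoeff g)) :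
    shift g = h :=
  mul_left_cancel₀ X_ne_zero <| add_right_cancel <| (eq_X_mul_shift_add_const g).symm.trans H

theorem constantCoeff_aeval {R : Type*} [CommSemiring R] (φ : R⟦X⟧) (p : Polynomial R) :
    constantCoeff (Polynomial.aeval φ p) = p.eval (constantCoeff φ) := by
  induction p using Polynomial.induction_on <;> simp_all

section Polynomial

open Polynomial hiding X C
open Finset

local notation "Y" => (Polynomial.X : (ZMod 2)[X])

theorem X_add_one_mul_phi (n : ℕ) : (Y + 1) * phi n = Y ^ (n + 1) + Y := by
  induction n with
  | zero => simp [phi, CharTwo.add_self_eq_zero]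
  | succ n ih =>
    rw [phi, sum_Icc_succ_top (by omega), ← phi]
    grind

theorem range_succ_eq_insert_zero_Icc (n : ℕ) : range (n + 1) = insert 0 (Icc 1 n) := by
  ext i; simp; omega

theorem X_add_one_mul_psi (q : (ZMod 2)[X]) :
    (Y + 1) * psi q = q + Polynomial.C (q.eval 0) + Y * Polynomial.C (q.eval 1 + q.eval 0) := by
  set I := Icc 1 q.natDegree
  have hq_sum : q = Polynomial.C (q.coeff 0) + ∑ i ∈ I, Polynomial.C (q.coeff i) * Y ^ i := by
    conv_lhs =>
      rw [q.as_sum_range_C_mul_X_pow, range_succ_eq_insert_zero_Icc, sum_insert (by simp)]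
    simp [I]
  have heval_one : q.eval 1 = q.coeff 0 + ∑ i ∈ I, q.coeff i := by
    rw [eval_eq_sum_range, range_succ_eq_insert_zero_Icc, sum_insert (by simp)]
    simp [I]
  have hpsi : (Y + 1) * psi q =
      ∑ i ∈ I, Polynomial.C (q.coeff i) * Y ^ i +
        Y * Polynomial.C (∑ i ∈ I, q.coeff i) := by
    rw [psi, mul_sum, map_sum, mul_sum, ← sum_add_distrib]
    refine sum_congr rfl fun i hi => ?_
    rw [mul_left_comm, X_add_one_mul_phi, Nat.sub_add_cancel (mem_Icc.1 hi).1]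
    ring
  rw [hpsi, heval_one, ← coeff_zero_eq_eval_zero]
  linear_combination (norm := grind) hq_sum

end Polynomial

theorem one_add_X_add_X_sq_mul_inv : (1 + X + X ^ 2 : (ZMod 2)⟦X⟧) * (1 + X + X ^ 2)⁻¹ = 1 :=
  PowerSeries.mul_inv_cancel _ (by simp)

theorem one_add_X_sq_mul_inv : (1 + X ^ 2 : (ZMod 2)⟦X⟧) * (1 + X ^ 2)⁻¹ = 1 :=
  PowerSeries.mul_inv_cancel _ (by simp)

theorem X_mul_u_add_v : X * (u + v) = u := by
  grind [u, v, one_add_X_add_X_sq_mul_inv]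

theorem f_mul_u : f * u = f + 1 := by
  grind [u, f, one_add_X_add_X_sq_mul_inv, one_add_X_sq_mul_inv]

theorem f_add_one_mul_v : (f + 1) * v = X * (u + v * f) := by
  grind [u, v, f, one_add_X_add_X_sq_mul_inv, one_add_X_sq_mul_inv]

theorem f_add_one_ne_zero : f + 1 ≠ 0 := by
  have hf : f + 1 = X * (1 + X ^ 2)⁻¹ := by grind [f, one_add_X_sq_mul_inv]
  rw [hf]
  exact mul_ne_zero X_ne_zero (right_ne_zero_of_mul_eq_one one_add_X_sq_mul_inv)

theorem constantCoeff_u : constantCoeff u = 0 := by simp [u]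

theorem constantCoeff_v : constantCoeff v = 1 := by simp [v]

theorem constantCoeff_f : constantCoeff f = 1 := by simp [f]

theorem f_add_one_mul_aeval_psi (q : Polynomial (ZMod 2)) :
    (f + 1) * Polynomial.aeval f (psi q) =
      Polynomial.aeval f q + C (q.eval 0) + f * (C (q.eval 1) + C (q.eval 0)) := by
  simpa [← C_eq_algebraMap] using congrArg (Polynomial.aeval f) (X_add_one_mul_psi q)

theorem v_mul_aeval (q : Polynomial (ZMod 2)) :
    v * Polynomial.aeval f q =
      X * (u * (Polynomial.aeval f (psi q) + C (q.eval 0)) +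
        v * (f * Polynomial.aeval f (psi q) + f * C (q.eval 1) + f * C (q.eval 0))) +
      C (q.eval 1) := by
  apply mul_left_cancel₀ f_add_one_ne_zero
  -- the terms left over by this combination cancel in pairs, i.e. only in characteristic 2
  linear_combination (norm := grind) X * (u + v * f) * f_add_one_mul_aeval_psi q
    + Polynomial.aeval f q * f_add_one_mul_v + f * C (q.eval 1) * X_mul_u_add_v
    + C (q.eval 1) * f_mul_u

/-- Section formula for `x^{p(a)} z^{q(a)}` in power-series form: for all polynomials
`p, q` over `ZMod 2`,
`σ(u·p(f) + v·q(f)) = u·(p(f) + ψ_q(f) + q(0)) + v·(p(f) + f·ψ_q(f) + f·q(1) + f·q(0))`. -/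
theorem shift_section (p q : Polynomial (ZMod 2)) :
    shift (u * Polynomial.aeval f p + v * Polynomial.aeval f q) =
      u * (Polynomial.aeval f p + Polynomial.aeval f (psi q) + C (R := ZMod 2) (q.eval 0)) +
      v * (Polynomial.aeval f p + f * Polynomial.aeval f (psi q) +
        f * C (R := ZMod 2) (q.eval 1) + f * C (R := ZMod 2) (q.eval 0)) := by
  apply shift_eq_of_eq_X_mul_add
  rw [map_add, map_mul, map_mul, constantCoeff_aeval, constantCoeff_aeval, constantCoeff_u,
    constantCoeff_v, constantCoeff_f, zero_mul, one_mul, zero_add, v_mul_aeval]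
  linear_combination -Polynomial.aeval f p * X_mul_u_add_v
end
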